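/- For every k ∈ ℕ, the Catalan number C_k = (1/(k+1)) · binom(2k, k) satisfies C_k = Σ_{j=0}^k (−1)^j · 2^{k−j} · binom(k, j) · binom(j, ⌊j/2⌋). -/

import Mathlib

/-!
The central binomial coefficient `C(j, ⌊j/2⌋)` is the sum of the coefficients of `X ^ j` and
`X ^ (j + 1)` in `(1 + X²) ^ j`. Hence the sum is `[X ^ k] + [X ^ (k + 1)]` applied to
`∑ⱼ (-1) ^ j 2 ^ (k - j) C(k, j) X ^ (k - j) (1 + X²) ^ j = (2X - 1 - X²) ^ k`, that is, to
`(-1) ^ k (X - 1) ^ (2k)`, which is `C(2k, k) - C(2k, k + 1) = C(2k, k) / (k + 1)`.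
-/

open Finset Polynomial

namespace Polynomial

theorem coeff_one_add_X_sq_pow {R : Type*} [CommSemiring R] (j m : ℕ) :
    ((1 + X ^ 2 : R[X]) ^ j).coeff m = if 2 ∣ m then (j.choose (m / 2) : R) else 0 := by
  have : (1 + X ^ 2 : R[X]) ^ j = expand R 2 ((1 + X) ^ j) := by simp
  rw [this, coeff_expand two_pos, coeff_one_add_X_pow]

theorem coeff_one_add_X_sq_pow_self_add_coeff_succ {R : Type*} [CommSemiring R] (j : ℕ) :
    ((1 + X ^ 2 : R[X]) ^ j).coeff j + ((1 + X ^ 2 : R[X]) ^ j).coeff (j + 1)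
      = (j.choose (j / 2) : R) := by
  simp only [coeff_one_add_X_sq_pow]
  rcases Nat.even_or_odd' j with ⟨m, rfl | rfl⟩
  · simp [Nat.dvd_add_right (dvd_mul_right 2 m)]
  · rw [show 2 * m + 1 + 1 = 2 * (m + 1) by ring, Nat.mul_div_cancel_left _ two_pos,
      Nat.choose_symm_half, show (2 * m + 1) / 2 = m by omega]
    simp [Nat.dvd_add_right (dvd_mul_right 2 m)]

theorem coeff_X_pow_sub_mul_one_add_X_sq_pow {R : Type*} [CommSemiring R] {j k : ℕ}
    (hj : j ≤ k) :
    (X ^ (k - j) * (1 + X ^ 2 : R[X]) ^ j).coeff k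
      + (X ^ (k - j) * (1 + X ^ 2 : R[X]) ^ j).coeff (k + 1) = (j.choose (j / 2) : R) := by
  rw [coeff_X_pow_mul', coeff_X_pow_mul', if_pos (by omega), if_pos (by omega),
    show k - (k - j) = j by omega, show k + 1 - (k - j) = j + 1 by omega,
    coeff_one_add_X_sq_pow_self_add_coeff_succ]

theorem neg_one_pow_mul_X_sub_one_pow_two_mul {R : Type*} [CommRing R] (k : ℕ) :
    (-1) ^ k * (X - 1 : R[X]) ^ (2 * k)
      = ∑ j ∈ range (k + 1),
          ((-1) ^ j * 2 ^ (k - j) * (k.choose j : R)) • (X ^ (k - j) * (1 + X ^ 2) ^ j) := by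
  rw [pow_mul, ← mul_pow, show (-1) * (X - 1 : R[X]) ^ 2 = -(1 + X ^ 2) + 2 * X by ring, add_pow]
  refine sum_congr rfl fun j _ => ?_
  simp only [smul_eq_C_mul, C_mul, C_pow, C_neg, C_1, ← C_eq_natCast, C_ofNat,
    neg_pow (1 + X ^ 2 : R[X])]
  ring

theorem coeff_neg_one_pow_mul_X_sub_one_pow_two_mul {R : Type*} [CommRing R] (k : ℕ) :
    ((-1) ^ k * (X - 1 : R[X]) ^ (2 * k)).coeff k
      + ((-1) ^ k * (X - 1 : R[X]) ^ (2 * k)).coeff (k + 1)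
      = ((2 * k).choose k : R) - ((2 * k).choose (k + 1) : R) := by
  rw [sub_eq_add_neg, ← C_1, ← C_neg, ← C_pow]
  simp only [coeff_C_mul, coeff_X_add_C_pow]
  rcases k with _ | k
  · simp
  · rw [show 2 * (k + 1) - (k + 1) = k + 1 by omega,
      show 2 * (k + 1) - (k + 1 + 1) = k by omega, pow_succ (-1 : R) k]
    have hs : ((-1 : R) ^ k * -1) ^ 2 = 1 := by
      rw [← pow_succ, ← pow_mul, pow_mul', neg_one_sq, one_pow]
    linear_combination
      (((2 * (k + 1)).choose (k + 1) : R) - ((2 * (k + 1)).choose (k + 1 + 1) : R)) * hs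

end Polynomial

theorem sum_neg_one_pow_mul_two_pow_mul_choose_mul_choose_half {R : Type*} [CommRing R]
    (k : ℕ) :
    ∑ j ∈ range (k + 1), (-1) ^ j * 2 ^ (k - j) * (k.choose j : R) * (j.choose (j / 2) : R)
      = ((2 * k).choose k : R) - ((2 * k).choose (k + 1) : R) := by
  let ℓ : R[X] →ₗ[R] R := lcoeff R k + lcoeff R (k + 1)
  have hℓ (p : R[X]) : ℓ p = p.coeff k + p.coeff (k + 1) := rfl
  calc ∑ j ∈ range (k + 1), (-1) ^ j * 2 ^ (k - j) * (k.choose j : R) * (j.choose (j / 2) : R)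
      = ℓ (∑ j ∈ range (k + 1),
          ((-1) ^ j * 2 ^ (k - j) * (k.choose j : R)) • (X ^ (k - j) * (1 + X ^ 2) ^ j)) := by
        rw [map_sum]
        refine sum_congr rfl fun j hj => ?_
        rw [map_smul, hℓ, smul_eq_mul,
          coeff_X_pow_sub_mul_one_add_X_sq_pow (Nat.lt_succ_iff.mp (mem_range.mp hj))]
    _ = ((2 * k).choose k : R) - ((2 * k).choose (k + 1) : R) := by
        rw [← neg_one_pow_mul_X_sub_one_pow_two_mul, hℓ,
          coeff_neg_one_pow_mul_X_sub_one_pow_two_mul]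

theorem choose_two_mul_div_succ_eq_sub (k : ℕ) :
    ((2 * k).choose k : ℚ) / (k + 1) = (2 * k).choose k - (2 * k).choose (k + 1) := by
  have h := Nat.choose_succ_right_eq (2 * k) k
  rw [show 2 * k - k = k by omega] at h
  have hq : ((2 * k).choose (k + 1) : ℚ) * (k + 1) = (2 * k).choose k * k := by exact_mod_cast h
  field_simp
  linear_combination hq

theorem catalan_identity (k : ℕ) :
    ((2 * k).choose k : ℚ) / (k + 1)
      = ∑ j ∈ Finset.range (k + 1),
          (-1) ^ j * 2 ^ (k - j) * (k.choose j : ℚ) * (j.choose (j / 2) : ℚ) := by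
  rw [sum_neg_one_pow_mul_two_pow_mul_choose_mul_choose_half, choose_two_mul_div_succ_eq_sub]
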